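/- arXiv:1505.05926 — 2 statements merged into one kernel-verified Lean document; each statement's English description precedes it below -/
import Mathlib

section
/- For all finitely supported lattice functions f, g : ℤⁿ → Cl one has ⟨L_h f, g⟩_h = ⟨f, L_h g⟩_h, and moreover ⟨L_h f, g⟩_h = (1/2)·⟨A⁺ f, A⁺ g⟩_h + (1/2)·⟨A⁻ f, A⁻ g⟩_h. -/
open CliffordAlgebra

noncomputable section

/-- The quadratic form `Q(v) = -‖v‖²` on `ℝⁿ`. -/
abbrev Qf (n : ℕ) : QuadraticForm ℝ (Fin n → ℝ) :=
  QuadraticMap.weightedSumSquares ℝ (fun _ : Fin n => (-1 : ℝ))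

/-- The Clifford algebra `Cl_{0,n}`. -/
abbrev Cl (n : ℕ) := CliffordAlgebra (Qf n)

/-- The generators `e_j` of `Cl_{0,n}`. -/
def e (n : ℕ) (j : Fin n) : Cl n := ι (Qf n) (Pi.single j 1)

/-- The conjugation `u ↦ u†`: reversal composed with grade involution. -/
def dag {n : ℕ} (u : Cl n) : Cl n := reverse (involute u)

/-- Lattice functions `ℤⁿ → Cl`. The lattice point is `x = h·m`. -/
abbrev LF (n : ℕ) := (Fin n → ℤ) → Cl n

/-- Scalar component operator `A^{+j}`. -/
def AplusJ (n : ℕ) (h q μ : ℝ) (a : ℝ → ℝ) (j : Fin n) (f : LF n) : LF n :=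
  fun m => Real.sqrt (q * h / (4 * μ)) •
    (a (h * (m j : ℝ)) • f (m + Pi.single j 1) - (2 / (q * h)) • f m)

/-- Scalar component operator `A^{−j}`. -/
def AminusJ (n : ℕ) (h q μ : ℝ) (a : ℝ → ℝ) (j : Fin n) (f : LF n) : LF n :=
  fun m => Real.sqrt (q * h / (4 * μ)) •
    ((2 / (q * h)) • f m - a (h * (m j : ℝ) - h) • f (m - Pi.single j 1))

/-- The Clifford-vector ladder operator `A⁺`. -/
def Aplus (n : ℕ) (h q μ : ℝ) (a : ℝ → ℝ) (f : LF n) : LF n :=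
  fun m => ∑ j, e n j * AplusJ n h q μ a j f m

/-- The Clifford-vector ladder operator `A⁻`. -/
def Aminus (n : ℕ) (h q μ : ℝ) (a : ℝ → ℝ) (f : LF n) : LF n :=
  fun m => ∑ j, e n j * AminusJ n h q μ a j f m

/-- The discrete electric potential `Φ_h`. -/
def Phi (n : ℕ) (h μ : ℝ) (a : ℝ → ℝ) (m : Fin n → ℤ) : ℝ :=
  (h / (8 * μ)) * ∑ j, ((a (h * (m j : ℝ)))^2 + (a (h * (m j : ℝ) - h))^2)

/-- The discrete electromagnetic Schrödinger operator `L_h`. -/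
def Lh (n : ℕ) (h q μ : ℝ) (a : ℝ → ℝ) (f : LF n) : LF n :=
  fun m => (1 / (2 * μ)) • (∑ j, ((2 / (q * h)) • f m
      - a (h * (m j : ℝ)) • f (m + Pi.single j 1)
      - a (h * (m j : ℝ) - h) • f (m - Pi.single j 1)))
    + (q * Phi n h μ a m) • f m

/-- The forward finite difference Dirac operator `D⁺`. -/
def Dplus (n : ℕ) (h : ℝ) (f : LF n) : LF n :=
  fun m => ∑ j, e n j * ((1 / h) • (f (m + Pi.single j 1) - f m))

/-- The multiplication-type operator `M_h`. -/
def Mh (n : ℕ) (h q : ℝ) (a : ℝ → ℝ) (f : LF n) : LF n :=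
  fun m => ∑ j, e n j * ((h * (a (h * (m j : ℝ) - h))^2) • f (m - Pi.single j 1)
      - (4 / (q^2 * h)) • f m)

/-- The vacuum recursion `a(x_j)·φ(x + h e_j) = (2/(qh))·φ(x)`. -/
def VacuumRec (n : ℕ) (h q : ℝ) (a : ℝ → ℝ) (φ : (Fin n → ℤ) → ℝ) : Prop :=
  ∀ (m : Fin n → ℤ) (j : Fin n),
    a (h * (m j : ℝ)) * φ (m + Pi.single j 1) = (2 / (q * h)) * φ m


-- basic dag / e lemmas
def dagL (n : ℕ) : Cl n →ₗ[ℝ] Cl n := (reverse (Q := Qf n)) ∘ₗ (involute (Q := Qf n)).toLinearMap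

lemma dag_eq (n : ℕ) (u : Cl n) : dag u = dagL n u := rfl

lemma dag_add {n : ℕ} (u v : Cl n) : dag (u + v) = dag u + dag v := map_add (dagL n) u v
lemma dag_sub {n : ℕ} (u v : Cl n) : dag (u - v) = dag u - dag v := map_sub (dagL n) u v
lemma dag_smul {n : ℕ} (r : ℝ) (u : Cl n) : dag (r • u) = r • dag u := map_smul (dagL n) r u
lemma dag_sum {n : ℕ} {ι : Type*} (s : Finset ι) (f : ι → Cl n) :
    dag (∑ i ∈ s, f i) = ∑ i ∈ s, dag (f i) := map_sum (dagL n) f s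

lemma dag_mul {n : ℕ} (u v : Cl n) : dag (u * v) = dag v * dag u := by
  simp [dag, map_mul, reverse.map_mul]

lemma dag_e {n : ℕ} (j : Fin n) : dag (e n j) = - e n j := by
  simp [dag, e, involute_ι, reverse_ι]

lemma Qf_single (n : ℕ) (j : Fin n) : Qf n (Pi.single j 1) = -1 := by
  simp [QuadraticMap.weightedSumSquares_apply, Pi.single_apply]

lemma e_mul_self {n : ℕ} (j : Fin n) : e n j * e n j = -1 := by
  rw [e, ι_sq_scalar, Qf_single, map_neg, map_one]

lemma e_anticomm {n : ℕ} {j k : Fin n} (hjk : j ≠ k) : e n j * e n k = -(e n k * e n j) := by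
  have h1 := ι_mul_ι_add_swap (Q := Qf n) (Pi.single j 1) (Pi.single k 1)
  have h2 : QuadraticMap.polar (Qf n) (Pi.single j 1) (Pi.single k 1) = 0 := by
    simp only [QuadraticMap.polar, QuadraticMap.weightedSumSquares_apply]
    rw [Finset.sum_congr rfl (g := fun i =>
      (-1 : ℝ) • (Pi.single j 1 i * Pi.single j 1 i) + (-1 : ℝ) • (Pi.single k 1 i * Pi.single k 1 i))]
    · simp [Finset.sum_add_distrib]
    · intro i _
      rcases eq_or_ne i j with rfl | hij
      · simp [Pi.single_apply, hjk.symm]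
      · rcases eq_or_ne i k with rfl | hik
        · simp [Pi.single_apply, hij]
        · simp [Pi.single_apply, hij, hik]
  rw [h2] at h1
  simp only [map_zero] at h1
  rw [e, e]
  exact eq_neg_of_add_eq_zero_left h1

-- support and finsum infrastructure
open Function in
lemma supp_comp {n : ℕ} {v : LF n} (hv : (Function.support v).Finite)
    (F : (Fin n → ℤ) → Cl n → Cl n) (hF : ∀ m, F m 0 = 0) :
    (Function.support fun m => F m (v m)).Finite := by
  refine hv.subset fun m hm => ?_
  by_contra hmv
  simp only [Function.mem_support, not_not] at hmv
  exact hm (by simp [hmv, hF])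

lemma FS_shift {n : ℕ} {v : LF n} (hv : (Function.support v).Finite) (w : Fin n → ℤ) :
    (Function.support fun m => v (m + w)).Finite := by
  have h1 : (Function.support fun m => v (m + w)) = (Equiv.addRight w) ⁻¹' (Function.support v) := by
    ext m; simp [Function.support]
  rw [h1]
  exact hv.preimage ((Equiv.injective _).injOn)

lemma FS_shift' {n : ℕ} {v : LF n} (hv : (Function.support v).Finite) (w : Fin n → ℤ) :
    (Function.support fun m => v (m - w)).Finite := by
  simpa [sub_eq_add_neg] using FS_shift hv (-w)

lemma FS_ap {n : ℕ} (h q μ : ℝ) (a : ℝ → ℝ) (j : Fin n) {v : LF n}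
    (hv : (Function.support v).Finite) :
    (Function.support (AplusJ n h q μ a j v)).Finite := by
  refine ((FS_shift hv (Pi.single j 1)).union hv).subset fun m hm => ?_
  by_contra hc
  simp only [Set.mem_union, Function.mem_support, not_or, not_not] at hc
  exact hm (by simp [AplusJ, hc.1, hc.2])

lemma FS_am {n : ℕ} (h q μ : ℝ) (a : ℝ → ℝ) (j : Fin n) {v : LF n}
    (hv : (Function.support v).Finite) :
    (Function.support (AminusJ n h q μ a j v)).Finite := by
  refine ((FS_shift' hv (Pi.single j 1)).union hv).subset fun m hm => ?_
  by_contra hc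
  simp only [Set.mem_union, Function.mem_support, not_or, not_not] at hc
  exact hm (by simp [AminusJ, hc.1, hc.2])

lemma finsum_shift {n : ℕ} (φ : (Fin n → ℤ) → Cl n) (w : Fin n → ℤ) :
    (∑ᶠ m, φ (m - w)) = ∑ᶠ m, φ m :=
  finsum_comp_equiv (Equiv.subRight w)

lemma smul_finsum2 {n : ℕ} (r : ℝ) {φ : (Fin n → ℤ) → Cl n}
    (hφ : (Function.support φ).Finite) :
    r • (∑ᶠ m, φ m) = ∑ᶠ m, r • φ m :=
  (DistribMulAction.toAddMonoidHom (Cl n) r).map_finsum hφ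

lemma finsum_neg' {n : ℕ} (φ : (Fin n → ℤ) → Cl n) :
    (∑ᶠ m, -φ m) = -∑ᶠ m, φ m := by
  exact finsum_neg_distrib φ

section Adj
variable {n : ℕ} (h q μ : ℝ) (a : ℝ → ℝ) (j : Fin n) (C : Cl n) (v u : LF n)

lemma adj_plus (hu : (Function.support u).Finite) :
    (∑ᶠ m, (h ^ n) • (dag (AplusJ n h q μ a j v m) * (C * u m)))
      = - ∑ᶠ m, (h ^ n) • (dag (v m) * (C * AminusJ n h q μ a j u m)) := by
  set s : ℝ := Real.sqrt (q * h / (4 * μ)) with hs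
  set δ : Fin n → ℤ := Pi.single j 1 with hδ
  set A : LF n := fun m => (h ^ n * (s * a (h * (m j : ℝ)))) • (dag (v (m + δ)) * (C * u m)) with hA
  set B : LF n := fun m => (h ^ n * (s * (2 / (q * h)))) • (dag (v m) * (C * u m)) with hB
  set A' : LF n := fun m =>
    (h ^ n * (s * a (h * (m j : ℝ) - h))) • (dag (v m) * (C * u (m - δ))) with hA'
  have hsuppA : (Function.support A).Finite := by
    refine supp_comp hu (fun m x => (h ^ n * (s * a (h * (m j : ℝ)))) • (dag (v (m + δ)) * (C * x))) ?_
    intro m; simp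
  have hsuppB : (Function.support B).Finite := by
    refine supp_comp hu (fun m x => (h ^ n * (s * (2 / (q * h)))) • (dag (v m) * (C * x))) ?_
    intro m; simp
  have hsuppA' : (Function.support A').Finite := by
    refine supp_comp (FS_shift' hu δ)
      (fun m x => (h ^ n * (s * a (h * (m j : ℝ) - h))) • (dag (v m) * (C * x))) ?_
    intro m; simp
  have hL : ∀ m, (h ^ n) • (dag (AplusJ n h q μ a j v m) * (C * u m)) = A m - B m := by
    intro m
    simp only [AplusJ, dag_smul, dag_sub, dag_smul, hA, hB, smul_sub, sub_mul, smul_mul_assoc]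
    module
  have hR : ∀ m, (h ^ n) • (dag (v m) * (C * AminusJ n h q μ a j u m)) = B m - A' m := by
    intro m
    simp only [AminusJ, hB, hA', mul_smul_comm, mul_sub, smul_sub, smul_smul]
    try module
  have hshift : (∑ᶠ m, A m) = ∑ᶠ m, A' m := by
    rw [← finsum_shift A δ]
    refine finsum_congr fun m => ?_
    simp only [hA, hA']
    have h1 : m - δ + δ = m := by abel
    have h2 : ((m - δ) j : ℝ) = (m j : ℝ) - 1 := by simp [hδ, Pi.sub_apply]
    rw [h1, h2, show h * ((m j : ℝ) - 1) = h * (m j : ℝ) - h by ring]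
  calc (∑ᶠ m, (h ^ n) • (dag (AplusJ n h q μ a j v m) * (C * u m)))
      = ∑ᶠ m, (A m - B m) := finsum_congr hL
    _ = (∑ᶠ m, A m) - ∑ᶠ m, B m := finsum_sub_distrib hsuppA hsuppB
    _ = (∑ᶠ m, A' m) - ∑ᶠ m, B m := by rw [hshift]
    _ = - ((∑ᶠ m, B m) - ∑ᶠ m, A' m) := by abel
    _ = - ∑ᶠ m, (B m - A' m) := by rw [finsum_sub_distrib hsuppB hsuppA']
    _ = - ∑ᶠ m, (h ^ n) • (dag (v m) * (C * AminusJ n h q μ a j u m)) := by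
        rw [finsum_congr hR]

lemma adj_minus (hu : (Function.support u).Finite) :
    (∑ᶠ m, (h ^ n) • (dag (AminusJ n h q μ a j v m) * (C * u m)))
      = - ∑ᶠ m, (h ^ n) • (dag (v m) * (C * AplusJ n h q μ a j u m)) := by
  set s : ℝ := Real.sqrt (q * h / (4 * μ)) with hs
  set δ : Fin n → ℤ := Pi.single j 1 with hδ
  set B : LF n := fun m => (h ^ n * (s * (2 / (q * h)))) • (dag (v m) * (C * u m)) with hB
  set A2 : LF n := fun m =>
    (h ^ n * (s * a (h * (m j : ℝ) - h))) • (dag (v (m - δ)) * (C * u m)) with hA2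
  set At : LF n := fun m =>
    (h ^ n * (s * a (h * (m j : ℝ)))) • (dag (v m) * (C * u (m + δ))) with hAt
  have hsuppB : (Function.support B).Finite := by
    refine supp_comp hu (fun m x => (h ^ n * (s * (2 / (q * h)))) • (dag (v m) * (C * x))) ?_
    intro m; simp
  have hsuppA2 : (Function.support A2).Finite := by
    refine supp_comp hu
      (fun m x => (h ^ n * (s * a (h * (m j : ℝ) - h))) • (dag (v (m - δ)) * (C * x))) ?_
    intro m; simp
  have hsuppAt : (Function.support At).Finite := by
    refine supp_comp (FS_shift hu δ)
      (fun m x => (h ^ n * (s * a (h * (m j : ℝ)))) • (dag (v m) * (C * x))) ?_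
    intro m; simp
  have hL : ∀ m, (h ^ n) • (dag (AminusJ n h q μ a j v m) * (C * u m)) = B m - A2 m := by
    intro m
    simp only [AminusJ, dag_smul, dag_sub, hB, hA2, smul_sub, sub_mul, smul_mul_assoc]
    try module
  have hR : ∀ m, (h ^ n) • (dag (v m) * (C * AplusJ n h q μ a j u m)) = At m - B m := by
    intro m
    simp only [AplusJ, hB, hAt, mul_smul_comm, mul_sub, smul_sub, smul_smul]
    try module
  have hshift : (∑ᶠ m, At m) = ∑ᶠ m, A2 m := by
    rw [← finsum_shift At δ]
    refine finsum_congr fun m => ?_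
    simp only [hAt, hA2]
    have h1 : m - δ + δ = m := by abel
    have h2 : ((m - δ) j : ℝ) = (m j : ℝ) - 1 := by simp [hδ, Pi.sub_apply]
    rw [h1, h2, show h * ((m j : ℝ) - 1) = h * (m j : ℝ) - h by ring]
  calc (∑ᶠ m, (h ^ n) • (dag (AminusJ n h q μ a j v m) * (C * u m)))
      = ∑ᶠ m, (B m - A2 m) := finsum_congr hL
    _ = (∑ᶠ m, B m) - ∑ᶠ m, A2 m := finsum_sub_distrib hsuppB hsuppA2
    _ = (∑ᶠ m, B m) - ∑ᶠ m, At m := by rw [hshift]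
    _ = - ((∑ᶠ m, At m) - ∑ᶠ m, B m) := by abel
    _ = - ∑ᶠ m, (At m - B m) := by rw [finsum_sub_distrib hsuppAt hsuppB]
    _ = - ∑ᶠ m, (h ^ n) • (dag (v m) * (C * AplusJ n h q μ a j u m)) := by
        rw [finsum_congr hR]

end Adj

lemma comm1 {n : ℕ} (h q μ : ℝ) (a : ℝ → ℝ) {j k : Fin n} (hjk : j ≠ k) (g : LF n) :
    AminusJ n h q μ a j (AplusJ n h q μ a k g) = AplusJ n h q μ a k (AminusJ n h q μ a j g) := by
  funext m
  simp only [AminusJ, AplusJ, Pi.sub_apply, Pi.add_apply,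
    Pi.single_eq_of_ne hjk.symm, Pi.single_eq_of_ne hjk, sub_zero, add_zero,
    sub_add_eq_add_sub]
  module

lemma Lpoint {n : ℕ} (h q μ : ℝ) (hh : 0 < h) (hq : 0 < q) (hμ : 0 < μ)
    (a : ℝ → ℝ) (g : LF n) (m : Fin n → ℤ) :
    Lh n h q μ a g m = (-(1/2 : ℝ)) • ∑ j,
      (AminusJ n h q μ a j (AplusJ n h q μ a j g) m
        + AplusJ n h q μ a j (AminusJ n h q μ a j g) m) := by
  set s : ℝ := Real.sqrt (q * h / (4 * μ)) with hsdef
  have hs : s * s = q * h / (4 * μ) := Real.mul_self_sqrt (by positivity)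
  have c1 : (1 / (2 * μ)) = s * s * (2 / (q * h)) := by
    rw [hs]; field_simp; ring
  have hqPhi : (q * Phi n h μ a m) = ∑ j,
      (s * s / 2) * ((a (h * (m j : ℝ)))^2 + (a (h * (m j : ℝ) - h))^2) := by
    simp only [Phi]
    rw [Finset.mul_sum, Finset.mul_sum]
    refine Finset.sum_congr rfl fun j _ => ?_
    rw [hs]; field_simp; ring
  simp only [Lh]
  rw [hqPhi, Finset.sum_smul, c1, Finset.smul_sum, ← Finset.sum_add_distrib,
    Finset.smul_sum]
  refine Finset.sum_congr rfl fun j _ => ?_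
  have h1 : m + Pi.single j 1 - Pi.single j 1 = m := by abel
  have h2 : m - Pi.single j 1 + Pi.single j 1 = m := by abel
  have h3 : (((m + Pi.single j 1 : Fin n → ℤ) j : ℤ) : ℝ) = (m j : ℝ) + 1 := by
    simp
  have h4 : (((m - Pi.single j 1 : Fin n → ℤ) j : ℤ) : ℝ) = (m j : ℝ) - 1 := by
    simp
  simp only [AminusJ, AplusJ, h1, h2, h3, h4,
    show h * ((m j : ℝ) + 1) - h = h * (m j : ℝ) by ring,
    show h * ((m j : ℝ) - 1) = h * (m j : ℝ) - h by ring]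
  module

lemma antisym_zero {n : ℕ} {M : Type*} [AddCommGroup M] [Module ℝ M]
    (F : Fin n → Fin n → M) (hF : ∀ j k, j ≠ k → F j k = - F k j) :
    (∑ j, ∑ k ∈ Finset.univ.erase j, F j k) = 0 := by
  set S := ∑ j, ∑ k ∈ Finset.univ.erase j, F j k with hS
  have hswap : S = ∑ k, ∑ j ∈ Finset.univ.erase k, F j k := by
    rw [hS]
    refine Finset.sum_comm' fun x y => ?_
    simp only [Finset.mem_univ, Finset.mem_erase, true_and, and_true]
    exact ⟨fun hy => hy.symm, fun hx => hx.symm⟩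
  have hneg : S = -S := by
    nth_rewrite 1 [hswap]
    rw [hS, ← Finset.sum_neg_distrib]
    refine Finset.sum_congr rfl fun k _ => ?_
    rw [← Finset.sum_neg_distrib]
    refine Finset.sum_congr rfl fun j hj => ?_
    exact hF j k (Finset.ne_of_mem_erase hj)
  have h2 : S + S = 0 := by nth_rewrite 1 [hneg]; abel
  calc S = (1/2 : ℝ) • (S + S) := by rw [smul_add]; module
    _ = 0 := by rw [h2, smul_zero]


lemma supp_union_add {n : ℕ} {F G : LF n}
    (hF : (Function.support F).Finite) (hG : (Function.support G).Finite) :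
    (Function.support fun m => F m + G m).Finite := by
  refine (hF.union hG).subset fun m hm => ?_
  by_contra hc
  simp only [Set.mem_union, Function.mem_support, not_or, not_not] at hc
  exact hm (by simp [Function.mem_support, hc.1, hc.2])

/-- `⟨L f, g⟩ = ∑ j, ½(P⁺ⱼ + P⁻ⱼ)`. -/
lemma pair_L_left {n : ℕ} {h q μ : ℝ} (hh : 0 < h) (hq : 0 < q) (hμ : 0 < μ)
    (a : ℝ → ℝ) {f g : LF n} (hg : (Function.support g).Finite) :
    (∑ᶠ m, (h ^ n) • (dag (Lh n h q μ a f m) * g m))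
      = ∑ j, (1/2 : ℝ) •
        ((∑ᶠ m, (h ^ n) • (dag (AplusJ n h q μ a j f m) * AplusJ n h q μ a j g m))
          + (∑ᶠ m, (h ^ n) • (dag (AminusJ n h q μ a j f m) * AminusJ n h q μ a j g m))) := by
  have hpt : ∀ m, (h ^ n) • (dag (Lh n h q μ a f m) * g m)
      = ∑ j, ((-(1/2) : ℝ)) • ((h ^ n) • (dag (AminusJ n h q μ a j (AplusJ n h q μ a j f) m) * g m)
          + (h ^ n) • (dag (AplusJ n h q μ a j (AminusJ n h q μ a j f) m) * g m)) := by
    intro m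
    rw [Lpoint h q μ hh hq hμ a f m, dag_smul, dag_sum, smul_mul_assoc, Finset.sum_mul,
      Finset.smul_sum, Finset.smul_sum]
    refine Finset.sum_congr rfl fun j _ => ?_
    rw [dag_add, add_mul]
    module
  rw [finsum_congr hpt]
  rw [finsum_sum_comm _ _ (fun j _ => by
    refine supp_comp hg (fun m x =>
      ((-(1/2) : ℝ)) • ((h ^ n) • (dag (AminusJ n h q μ a j (AplusJ n h q μ a j f) m) * x)
        + (h ^ n) • (dag (AplusJ n h q μ a j (AminusJ n h q μ a j f) m) * x))) ?_
    intro m; simp)]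
  refine Finset.sum_congr rfl fun j _ => ?_
  have hsupp1 : (Function.support fun m =>
      (h ^ n) • (dag (AminusJ n h q μ a j (AplusJ n h q μ a j f) m) * g m)).Finite := by
    refine supp_comp hg (fun m x =>
      (h ^ n) • (dag (AminusJ n h q μ a j (AplusJ n h q μ a j f) m) * x)) ?_
    intro m; simp
  have hsupp2 : (Function.support fun m =>
      (h ^ n) • (dag (AplusJ n h q μ a j (AminusJ n h q μ a j f) m) * g m)).Finite := by
    refine supp_comp hg (fun m x =>
      (h ^ n) • (dag (AplusJ n h q μ a j (AminusJ n h q μ a j f) m) * x)) ?_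
    intro m; simp
  rw [← smul_finsum2 (-(1/2) : ℝ) (supp_union_add hsupp1 hsupp2)]
  rw [finsum_add_distrib hsupp1 hsupp2]
  have e1 : (∑ᶠ m, (h ^ n) • (dag (AminusJ n h q μ a j (AplusJ n h q μ a j f) m) * g m))
      = - ∑ᶠ m, (h ^ n) • (dag (AplusJ n h q μ a j f m) * AplusJ n h q μ a j g m) := by
    have h1 := adj_minus h q μ a j (1 : Cl n) (AplusJ n h q μ a j f) g hg
    simpa only [one_mul] using h1
  have e2 : (∑ᶠ m, (h ^ n) • (dag (AplusJ n h q μ a j (AminusJ n h q μ a j f) m) * g m))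
      = - ∑ᶠ m, (h ^ n) • (dag (AminusJ n h q μ a j f m) * AminusJ n h q μ a j g m) := by
    have h1 := adj_plus h q μ a j (1 : Cl n) (AminusJ n h q μ a j f) g hg
    simpa only [one_mul] using h1
  rw [e1, e2]
  module

/-- `⟨f, L g⟩ = ∑ j, ½(P⁺ⱼ + P⁻ⱼ)`. -/
lemma pair_L_right {n : ℕ} {h q μ : ℝ} (hh : 0 < h) (hq : 0 < q) (hμ : 0 < μ)
    (a : ℝ → ℝ) {f g : LF n} (hf : (Function.support f).Finite)
    (hg : (Function.support g).Finite) :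
    (∑ᶠ m, (h ^ n) • (dag (f m) * Lh n h q μ a g m))
      = ∑ j, (1/2 : ℝ) •
        ((∑ᶠ m, (h ^ n) • (dag (AplusJ n h q μ a j f m) * AplusJ n h q μ a j g m))
          + (∑ᶠ m, (h ^ n) • (dag (AminusJ n h q μ a j f m) * AminusJ n h q μ a j g m))) := by
  have hpt : ∀ m, (h ^ n) • (dag (f m) * Lh n h q μ a g m)
      = ∑ j, ((-(1/2) : ℝ)) • ((h ^ n) • (dag (f m) * AminusJ n h q μ a j (AplusJ n h q μ a j g) m)
          + (h ^ n) • (dag (f m) * AplusJ n h q μ a j (AminusJ n h q μ a j g) m)) := by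
    intro m
    rw [Lpoint h q μ hh hq hμ a g m, mul_smul_comm, Finset.mul_sum,
      Finset.smul_sum, Finset.smul_sum]
    refine Finset.sum_congr rfl fun j _ => ?_
    rw [mul_add]
    module
  rw [finsum_congr hpt]
  rw [finsum_sum_comm _ _ (fun j _ => by
    refine supp_comp hf (fun m x =>
      ((-(1/2) : ℝ)) • ((h ^ n) • (dag x * AminusJ n h q μ a j (AplusJ n h q μ a j g) m)
        + (h ^ n) • (dag x * AplusJ n h q μ a j (AminusJ n h q μ a j g) m))) ?_
    intro m; simp [dag])]
  refine Finset.sum_congr rfl fun j _ => ?_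
  have hsupp1 : (Function.support fun m =>
      (h ^ n) • (dag (f m) * AminusJ n h q μ a j (AplusJ n h q μ a j g) m)).Finite := by
    refine supp_comp (FS_am h q μ a j (FS_ap h q μ a j hg))
      (fun m x => (h ^ n) • (dag (f m) * x)) ?_
    intro m; simp
  have hsupp2 : (Function.support fun m =>
      (h ^ n) • (dag (f m) * AplusJ n h q μ a j (AminusJ n h q μ a j g) m)).Finite := by
    refine supp_comp (FS_ap h q μ a j (FS_am h q μ a j hg))
      (fun m x => (h ^ n) • (dag (f m) * x)) ?_
    intro m; simp
  rw [← smul_finsum2 (-(1/2) : ℝ) (supp_union_add hsupp1 hsupp2)]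
  rw [finsum_add_distrib hsupp1 hsupp2]
  have e1 : (∑ᶠ m, (h ^ n) • (dag (f m) * AminusJ n h q μ a j (AplusJ n h q μ a j g) m))
      = - ∑ᶠ m, (h ^ n) • (dag (AplusJ n h q μ a j f m) * AplusJ n h q μ a j g m) := by
    have h1 := adj_plus h q μ a j (1 : Cl n) f (AplusJ n h q μ a j g) (FS_ap h q μ a j hg)
    simp only [one_mul] at h1
    rw [← neg_eq_iff_eq_neg] at h1
    exact h1.symm
  have e2 : (∑ᶠ m, (h ^ n) • (dag (f m) * AplusJ n h q μ a j (AminusJ n h q μ a j g) m))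
      = - ∑ᶠ m, (h ^ n) • (dag (AminusJ n h q μ a j f m) * AminusJ n h q μ a j g m) := by
    have h1 := adj_minus h q μ a j (1 : Cl n) f (AminusJ n h q μ a j g) (FS_am h q μ a j hg)
    simp only [one_mul] at h1
    rw [← neg_eq_iff_eq_neg] at h1
    exact h1.symm
  rw [e1, e2]
  module

lemma supp_sum {n : ℕ} {ι : Type*} [Fintype ι] (F : ι → LF n)
    (hF : ∀ i, (Function.support (F i)).Finite) :
    (Function.support fun m => ∑ i, F i m).Finite := by
  refine Set.Finite.subset (Set.finite_iUnion hF) ?_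
  intro m hm
  by_contra hc
  simp only [Set.mem_iUnion, Function.mem_support, not_exists, not_not] at hc
  exact hm (Finset.sum_eq_zero fun i _ => hc i)

lemma pair_plus {n : ℕ} (h q μ : ℝ) (a : ℝ → ℝ) {f g : LF n}
    (hg : (Function.support g).Finite) :
    (∑ᶠ m, (h ^ n) • (dag (Aplus n h q μ a f m) * Aplus n h q μ a g m))
      = (∑ j, ∑ᶠ m, (h ^ n) • (dag (AplusJ n h q μ a j f m) * AplusJ n h q μ a j g m))
        + ∑ j, ∑ k ∈ Finset.univ.erase j,
            ∑ᶠ m, (h ^ n) • (dag (f m) *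
              ((e n j * e n k) * AminusJ n h q μ a j (AplusJ n h q μ a k g) m)) := by
  have hpt : ∀ m, (h ^ n) • (dag (Aplus n h q μ a f m) * Aplus n h q μ a g m)
      = ∑ j, ∑ k, -((h ^ n) • (dag (AplusJ n h q μ a j f m) *
          ((e n j * e n k) * AplusJ n h q μ a k g m))) := by
    intro m
    simp only [Aplus]
    rw [dag_sum, Finset.sum_mul_sum, Finset.smul_sum]
    refine Finset.sum_congr rfl fun j _ => ?_
    rw [Finset.smul_sum]
    refine Finset.sum_congr rfl fun k _ => ?_
    rw [dag_mul, dag_e, mul_neg, neg_mul, smul_neg, mul_assoc, mul_assoc,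
      ← mul_assoc (e n j)]
  have hsuppin : ∀ (j k : Fin n), (Function.support fun m =>
      -((h ^ n) • (dag (AplusJ n h q μ a j f m) *
          ((e n j * e n k) * AplusJ n h q μ a k g m)))).Finite := by
    intro j k
    refine supp_comp (FS_ap h q μ a k hg) (fun m x =>
      -((h ^ n) • (dag (AplusJ n h q μ a j f m) * ((e n j * e n k) * x)))) ?_
    intro m; simp
  rw [finsum_congr hpt]
  rw [finsum_sum_comm _ _ (fun j _ => supp_sum _ (fun k => hsuppin j k))]
  have hj : ∀ j : Fin n, (∑ᶠ m, ∑ k, -((h ^ n) • (dag (AplusJ n h q μ a j f m) *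
          ((e n j * e n k) * AplusJ n h q μ a k g m))))
      = (∑ᶠ m, (h ^ n) • (dag (AplusJ n h q μ a j f m) * AplusJ n h q μ a j g m))
        + ∑ k ∈ Finset.univ.erase j,
            ∑ᶠ m, (h ^ n) • (dag (f m) *
              ((e n j * e n k) * AminusJ n h q μ a j (AplusJ n h q μ a k g) m)) := by
    intro j
    rw [finsum_sum_comm _ _ (fun k _ => hsuppin j k)]
    rw [← Finset.add_sum_erase _ _ (Finset.mem_univ j)]
    congr 1
    · refine finsum_congr fun m => ?_
      rw [e_mul_self, neg_one_mul, mul_neg, smul_neg, neg_neg]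
    · refine Finset.sum_congr rfl fun k _ => ?_
      rw [finsum_neg', adj_plus h q μ a j (e n j * e n k) f (AplusJ n h q μ a k g)
        (FS_ap h q μ a k hg), neg_neg]
  rw [Finset.sum_congr rfl (fun j _ => hj j), Finset.sum_add_distrib]

lemma pair_minus {n : ℕ} (h q μ : ℝ) (a : ℝ → ℝ) {f g : LF n}
    (hg : (Function.support g).Finite) :
    (∑ᶠ m, (h ^ n) • (dag (Aminus n h q μ a f m) * Aminus n h q μ a g m))
      = (∑ j, ∑ᶠ m, (h ^ n) • (dag (AminusJ n h q μ a j f m) * AminusJ n h q μ a j g m))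
        + ∑ j, ∑ k ∈ Finset.univ.erase j,
            ∑ᶠ m, (h ^ n) • (dag (f m) *
              ((e n j * e n k) * AplusJ n h q μ a j (AminusJ n h q μ a k g) m)) := by
  have hpt : ∀ m, (h ^ n) • (dag (Aminus n h q μ a f m) * Aminus n h q μ a g m)
      = ∑ j, ∑ k, -((h ^ n) • (dag (AminusJ n h q μ a j f m) *
          ((e n j * e n k) * AminusJ n h q μ a k g m))) := by
    intro m
    simp only [Aminus]
    rw [dag_sum, Finset.sum_mul_sum, Finset.smul_sum]
    refine Finset.sum_congr rfl fun j _ => ?_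
    rw [Finset.smul_sum]
    refine Finset.sum_congr rfl fun k _ => ?_
    rw [dag_mul, dag_e, mul_neg, neg_mul, smul_neg, mul_assoc, mul_assoc,
      ← mul_assoc (e n j)]
  have hsuppin : ∀ (j k : Fin n), (Function.support fun m =>
      -((h ^ n) • (dag (AminusJ n h q μ a j f m) *
          ((e n j * e n k) * AminusJ n h q μ a k g m)))).Finite := by
    intro j k
    refine supp_comp (FS_am h q μ a k hg) (fun m x =>
      -((h ^ n) • (dag (AminusJ n h q μ a j f m) * ((e n j * e n k) * x)))) ?_
    intro m; simp
  rw [finsum_congr hpt]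
  rw [finsum_sum_comm _ _ (fun j _ => supp_sum _ (fun k => hsuppin j k))]
  have hj : ∀ j : Fin n, (∑ᶠ m, ∑ k, -((h ^ n) • (dag (AminusJ n h q μ a j f m) *
          ((e n j * e n k) * AminusJ n h q μ a k g m))))
      = (∑ᶠ m, (h ^ n) • (dag (AminusJ n h q μ a j f m) * AminusJ n h q μ a j g m))
        + ∑ k ∈ Finset.univ.erase j,
            ∑ᶠ m, (h ^ n) • (dag (f m) *
              ((e n j * e n k) * AplusJ n h q μ a j (AminusJ n h q μ a k g) m)) := by
    intro j
    rw [finsum_sum_comm _ _ (fun k _ => hsuppin j k)]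
    rw [← Finset.add_sum_erase _ _ (Finset.mem_univ j)]
    congr 1
    · refine finsum_congr fun m => ?_
      rw [e_mul_self, neg_one_mul, mul_neg, smul_neg, neg_neg]
    · refine Finset.sum_congr rfl fun k _ => ?_
      rw [finsum_neg', adj_minus h q μ a j (e n j * e n k) f (AminusJ n h q μ a k g)
        (FS_am h q μ a k hg), neg_neg]
  rw [Finset.sum_congr rfl (fun j _ => hj j), Finset.sum_add_distrib]

lemma cross_zero {n : ℕ} (h q μ : ℝ) (a : ℝ → ℝ) {f g : LF n}
    (hg : (Function.support g).Finite) :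
    ((∑ j, ∑ k ∈ Finset.univ.erase j,
        ∑ᶠ m, (h ^ n) • (dag (f m) *
          ((e n j * e n k) * AminusJ n h q μ a j (AplusJ n h q μ a k g) m)))
      + ∑ j, ∑ k ∈ Finset.univ.erase j,
        ∑ᶠ m, (h ^ n) • (dag (f m) *
          ((e n j * e n k) * AplusJ n h q μ a j (AminusJ n h q μ a k g) m))) = 0 := by
  set U : Fin n → Fin n → Cl n := fun j k =>
    ∑ᶠ m, (h ^ n) • (dag (f m) *
      ((e n j * e n k) * AminusJ n h q μ a j (AplusJ n h q μ a k g) m)) with hU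
  set V : Fin n → Fin n → Cl n := fun j k =>
    ∑ᶠ m, (h ^ n) • (dag (f m) *
      ((e n j * e n k) * AplusJ n h q μ a j (AminusJ n h q μ a k g) m)) with hV
  have hsuppU : ∀ j k, (Function.support fun m => (h ^ n) • (dag (f m) *
      ((e n j * e n k) * AminusJ n h q μ a j (AplusJ n h q μ a k g) m))).Finite := by
    intro j k
    refine supp_comp (FS_am h q μ a j (FS_ap h q μ a k hg))
      (fun m x => (h ^ n) • (dag (f m) * ((e n j * e n k) * x))) ?_
    intro m; simp
  have hsuppV : ∀ j k, (Function.support fun m => (h ^ n) • (dag (f m) *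
      ((e n j * e n k) * AplusJ n h q μ a j (AminusJ n h q μ a k g) m))).Finite := by
    intro j k
    refine supp_comp (FS_ap h q μ a j (FS_am h q μ a k hg))
      (fun m x => (h ^ n) • (dag (f m) * ((e n j * e n k) * x))) ?_
    intro m; simp
  have hcomb : (∑ j, ∑ k ∈ Finset.univ.erase j, U j k)
      + (∑ j, ∑ k ∈ Finset.univ.erase j, V j k)
      = ∑ j, ∑ k ∈ Finset.univ.erase j, (U j k + V j k) := by
    rw [← Finset.sum_add_distrib]
    refine Finset.sum_congr rfl fun j _ => ?_
    rw [← Finset.sum_add_distrib]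
  rw [hcomb]
  refine antisym_zero _ fun j k hjk => ?_
  have key : ∀ (j k : Fin n), j ≠ k → U j k + V j k
      = ∑ᶠ m, (h ^ n) • (dag (f m) * ((e n j * e n k) *
          (AminusJ n h q μ a j (AplusJ n h q μ a k g) m
            + AplusJ n h q μ a j (AminusJ n h q μ a k g) m))) := by
    intro j k _
    rw [hU, hV, ← finsum_add_distrib (hsuppU j k) (hsuppV j k)]
    refine finsum_congr fun m => ?_
    rw [mul_add, mul_add, smul_add]
  rw [key j k hjk, key k j hjk.symm]
  rw [← finsum_neg']
  refine finsum_congr fun m => ?_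
  rw [comm1 h q μ a hjk g, ← comm1 h q μ a hjk.symm g, e_anticomm hjk, neg_mul, mul_neg,
    smul_neg, add_comm (AplusJ n h q μ a k (AminusJ n h q μ a j g) m)
      (AminusJ n h q μ a k (AplusJ n h q μ a j g) m)]

lemma final_alg {n : ℕ} {M : Type*} [AddCommGroup M] [Module ℝ M]
    (P Q : Fin n → M) (U V : M) (hUV : U + V = 0) :
    (∑ j, (1/2 : ℝ) • (P j + Q j))
      = (1/2 : ℝ) • ((∑ j, P j) + U) + (1/2 : ℝ) • ((∑ j, Q j) + V) := by
  have h1 : (1/2 : ℝ) • ((∑ j, P j) + U) + (1/2 : ℝ) • ((∑ j, Q j) + V)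
      = (1/2 : ℝ) • ((∑ j, P j) + (∑ j, Q j)) + (1/2 : ℝ) • (U + V) := by module
  rw [h1, hUV, smul_zero, add_zero, ← Finset.sum_add_distrib, ← Finset.smul_sum]

/-- `L_h` is symmetric with respect to `⟨·,·⟩_h` and
`⟨L_h f, g⟩_h = ½⟨A⁺f, A⁺g⟩_h + ½⟨A⁻f, A⁻g⟩_h` for finitely supported lattice
functions. -/
theorem stmt_5 (n : ℕ) (h q μ : ℝ) (hh : 0 < h) (hq : 0 < q) (hμ : 0 < μ)
    (a : ℝ → ℝ) (f g : LF n)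
    (hf : (Function.support f).Finite) (hg : (Function.support g).Finite) :
    (∑ᶠ m : Fin n → ℤ, (h ^ n) • (dag (Lh n h q μ a f m) * g m))
      = (∑ᶠ m : Fin n → ℤ, (h ^ n) • (dag (f m) * Lh n h q μ a g m)) ∧
    (∑ᶠ m : Fin n → ℤ, (h ^ n) • (dag (Lh n h q μ a f m) * g m))
      = (1 / 2 : ℝ) • (∑ᶠ m : Fin n → ℤ, (h ^ n) •
            (dag (Aplus n h q μ a f m) * Aplus n h q μ a g m))
        + (1 / 2 : ℝ) • (∑ᶠ m : Fin n → ℤ, (h ^ n) •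
            (dag (Aminus n h q μ a f m) * Aminus n h q μ a g m)) := by
  constructor
  · exact (pair_L_left hh hq hμ a hg).trans (pair_L_right hh hq hμ a hf hg).symm
  · rw [pair_L_left hh hq hμ a hg, pair_plus h q μ a hg, pair_minus h q μ a hg]
    exact final_alg _ _ _ _ (cross_zero h q μ a hg)
end
end

section
/- For each j define (B_j f)(x) = h·a(x_j − h)²·f(x − h e_j) − (4/(q²h))·f(x). Then for every r ∈ ℕ and every lattice function f : ℤⁿ → Cl, the even power of M_h admits the multinomial expansion ((M_h)^{2r} f)(x) = (−1)^r · Σ_{σ ∈ ℕⁿ, σ_1 + ⋯ + σ_n = r} ( r! / (σ_1!·⋯·σ_n!) ) · ( (B_1^{2σ_1} ∘ B_2^{2σ_2} ∘ ⋯ ∘ B_n^{2σ_n}) f )(x). In particular, applied to a constant function x ↦ s this gives the representation of the even-order quasi-monomials m_{2r} = (M_h)^{2r} s. -/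
open CliffordAlgebra

noncomputable section

/-- The scalar operator `(B_j f)(x) = h·a(x_j − h)²·f(x − h e_j) − (4/(q²h))·f(x)`. -/
def Bop (n : ℕ) (h q : ℝ) (a : ℝ → ℝ) (j : Fin n) (f : LF n) : LF n :=
  fun m => (h * (a (h * (m j : ℝ) - h))^2) • f (m - Pi.single j 1)
    - (4 / (q^2 * h)) • f m

/-- The composition `B_1^{2σ_1} ∘ B_2^{2σ_2} ∘ ⋯ ∘ B_n^{2σ_n}`. -/
def Bcomp (n : ℕ) (h q : ℝ) (a : ℝ → ℝ) (σ : Fin n → ℕ) : LF n → LF n :=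
  (List.ofFn (fun j : Fin n => (Bop n h q a j)^[2 * σ j])).foldr (· ∘ ·) id

section aux
variable (n : ℕ) (h q : ℝ) (a : ℝ → ℝ)

lemma e_sq (j : Fin n) : e n j * e n j = algebraMap ℝ (Cl n) (-1) := by
  rw [e, ι_sq_scalar]
  congr 1
  simp [Pi.single_apply]

lemma e_anti {j k : Fin n} (hjk : j ≠ k) : e n j * e n k + e n k * e n j = 0 := by
  refine ι_mul_ι_add_swap_of_isOrtho ?_
  rw [QuadraticMap.isOrtho_def]
  simp only [QuadraticMap.weightedSumSquares_apply, Pi.add_apply, Pi.single_apply, smul_eq_mul]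
  rw [← Finset.sum_add_distrib]
  refine Finset.sum_congr rfl fun i _ => ?_
  rcases eq_or_ne i j with rfl | hij
  · simp [if_neg hjk]
  · rcases eq_or_ne i k with rfl | hik
    · simp [if_neg hij]
    · simp [if_neg hij, if_neg hik]

lemma Mh_eq (f : LF n) : Mh n h q a f = fun m => ∑ j, e n j * Bop n h q a j f m := rfl

lemma Bop_mul_left (j : Fin n) (u : Cl n) (g : LF n) :
    Bop n h q a j (fun m => u * g m) = fun m => u * Bop n h q a j g m := by
  funext m
  simp [Bop, mul_sub, mul_smul_comm]

lemma Bop_sum {ι : Type*} (j : Fin n) (s : Finset ι) (g : ι → LF n) :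
    Bop n h q a j (fun m => ∑ i ∈ s, g i m) = fun m => ∑ i ∈ s, Bop n h q a j (g i) m := by
  funext m
  simp [Bop, Finset.smul_sum, Finset.sum_sub_distrib]

lemma Bop_comm (j k : Fin n) (f : LF n) :
    Bop n h q a j (Bop n h q a k f) = Bop n h q a k (Bop n h q a j f) := by
  rcases eq_or_ne j k with rfl | hjk
  · rfl
  · funext m
    simp only [Bop, Pi.sub_apply, Pi.single_apply, if_neg hjk, if_neg hjk.symm,
      Int.cast_sub, Int.cast_zero, sub_zero, smul_sub, smul_smul]
    rw [sub_right_comm m (Pi.single j 1) (Pi.single k 1)]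
    ring_nf
    module

end aux

section aux2
variable (n : ℕ) (h q : ℝ) (a : ℝ → ℝ)

lemma Mh_sq (f : LF n) (m : Fin n → ℤ) :
    Mh n h q a (Mh n h q a f) m = - ∑ j, Bop n h q a j (Bop n h q a j f) m := by
  have h1 : Mh n h q a (Mh n h q a f) m
      = ∑ j, ∑ k, (e n j * e n k) * Bop n h q a j (Bop n h q a k f) m := by
    rw [Mh_eq]
    refine Finset.sum_congr rfl fun j _ => ?_
    rw [Mh_eq, Bop_sum]
    rw [Finset.mul_sum]
    refine Finset.sum_congr rfl fun k _ => ?_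
    rw [Bop_mul_left, mul_assoc]
  set S : Fin n → Fin n → Cl n := fun j k => Bop n h q a j (Bop n h q a k f) m with hS
  have hsymm : ∀ j k, S j k = S k j := fun j k => by rw [hS]; simp only; rw [Bop_comm]
  set T : Cl n := ∑ j, ∑ k, (e n j * e n k) * S j k with hT
  have h2 : T = ∑ j, ∑ k, (e n k * e n j) * S j k := by
    rw [hT, Finset.sum_comm]
    exact Finset.sum_congr rfl fun j _ => Finset.sum_congr rfl fun k _ => by rw [hsymm]
  have h3 : (2 : ℝ) • T = (2 : ℝ) • (- ∑ j, S j j) := by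
    have : T + T = ∑ j, ∑ k, (e n j * e n k + e n k * e n j) * S j k := by
      nth_rewrite 2 [h2]
      rw [← Finset.sum_add_distrib]
      refine Finset.sum_congr rfl fun j _ => ?_
      rw [← Finset.sum_add_distrib]
      exact Finset.sum_congr rfl fun k _ => by rw [add_mul]
    have hinner : ∀ j : Fin n,
        (∑ k, (e n j * e n k + e n k * e n j) * S j k) = (-2 : ℝ) • S j j := by
      intro j
      rw [Finset.sum_eq_single j]
      · rw [e_sq]
        rw [← map_add, Algebra.smul_def]
        norm_num
      · intro k _ hkj
        rw [e_anti n (Ne.symm hkj), zero_mul]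
      · intro hj; exact absurd (Finset.mem_univ j) hj
    rw [two_smul, two_smul, this, Finset.sum_congr rfl fun j _ => hinner j]
    rw [← Finset.smul_sum]
    module
  have h4 : T = - ∑ j, S j j := smul_right_injective _ (two_ne_zero) h3
  rw [h1, ← hT, ← hS] at *
  exact h4

end aux2

section lin
variable (n : ℕ) (h q : ℝ) (a : ℝ → ℝ)

lemma Bop_add' (j : Fin n) (f g : LF n) (m : Fin n → ℤ) :
    Bop n h q a j (f + g) m = Bop n h q a j f m + Bop n h q a j g m := by
  simp only [Bop, Pi.add_apply, smul_add]
  abel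

lemma Bop_smul' (j : Fin n) (c : ℝ) (f : LF n) (m : Fin n → ℤ) :
    Bop n h q a j (c • f) m = c • Bop n h q a j f m := by
  simp only [Bop, Pi.smul_apply, smul_sub, smul_smul, mul_comm c]

def BL (j : Fin n) : LF n →ₗ[ℝ] LF n where
  toFun := Bop n h q a j
  map_add' f g := funext fun m => Bop_add' n h q a j f g m
  map_smul' c f := funext fun m => Bop_smul' n h q a j c f m

def ML : LF n →ₗ[ℝ] LF n where
  toFun := Mh n h q a
  map_add' f g := by
    funext m
    show (∑ j, e n j * Bop n h q a j (f + g) m)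
      = (∑ j, e n j * Bop n h q a j f m) + ∑ j, e n j * Bop n h q a j g m
    rw [← Finset.sum_add_distrib]
    exact Finset.sum_congr rfl fun j _ => by rw [Bop_add', mul_add]
  map_smul' c f := by
    funext m
    show (∑ j, e n j * Bop n h q a j (c • f) m)
      = c • ∑ j, e n j * Bop n h q a j f m
    rw [Finset.smul_sum]
    exact Finset.sum_congr rfl fun j _ => by rw [Bop_smul', mul_smul_comm]

lemma BL_commute (j k : Fin n) : Commute (BL n h q a j) (BL n h q a k) := by
  show _ = _
  refine LinearMap.ext fun f => ?_
  show Bop n h q a j (Bop n h q a k f) = Bop n h q a k (Bop n h q a j f)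
  exact Bop_comm n h q a j k f

lemma ML_sq : ML n h q a * ML n h q a = - ∑ j, (BL n h q a j)^2 := by
  refine LinearMap.ext fun f => funext fun m => ?_
  show Mh n h q a (Mh n h q a f) m = _
  rw [Mh_sq]
  simp only [LinearMap.neg_apply, LinearMap.coe_sum, Finset.sum_apply, Pi.neg_apply,
    Pi.sub_apply, pow_two, Module.End.mul_apply]
  rfl

end lin

lemma list_prod_apply {M : Type*} [AddCommMonoid M] [Module ℝ M]
    (L : List (M →ₗ[ℝ] M)) :
    (L.map (fun φ : M →ₗ[ℝ] M => (φ : M → M))).foldr (· ∘ ·) id = ⇑L.prod := by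
  induction L with
  | nil => simp; rfl
  | cons A L ih =>
    simp only [List.map_cons, List.foldr_cons, List.prod_cons, ih]
    rfl

lemma noncommProd_univ {M : Type*} [Monoid M] {n : ℕ} (f : Fin n → M) (hc) :
    (Finset.univ : Finset (Fin n)).noncommProd f hc = (List.ofFn f).prod := by
  rw [Finset.noncommProd]
  have key : ∀ (s : Multiset M) (hs : {x | x ∈ s}.Pairwise Commute)
      (_ : s = ↑(List.ofFn f)), s.noncommProd hs = (List.ofFn f).prod := by
    rintro s hs rfl
    exact Multiset.noncommProd_coe _ _
  exact key _ _ (Fin.univ_val_map f)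

section main
variable (n : ℕ) (h q : ℝ) (a : ℝ → ℝ)

lemma Bcomp_eq (σ : Fin n → ℕ) :
    Bcomp n h q a σ = ⇑(List.ofFn (fun j => BL n h q a j ^ (2 * σ j))).prod := by
  rw [← list_prod_apply, List.map_ofFn]
  unfold Bcomp
  refine congrArg _ (congrArg List.ofFn (funext fun j => ?_))
  show (Bop n h q a j)^[2 * σ j] = ⇑(BL n h q a j ^ (2 * σ j))
  rw [Module.End.coe_pow]
  rfl

set_option synthInstance.maxHeartbeats 1000000 in
theorem stmt_15' (r : ℕ) (f : LF n) (m : Fin n → ℤ) :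
    ((Mh n h q a)^[2 * r] f) m
      = ((-1 : ℝ) ^ r) •
          ∑ σ ∈ Finset.Nat.antidiagonalTuple n r,
            ((r.factorial : ℝ) / ∏ j, ((σ j).factorial : ℝ)) •
              (Bcomp n h q a σ f) m := by
  classical
  have hcomm : ((Finset.univ : Finset (Fin n)) : Set (Fin n)).Pairwise
      (Function.onFun Commute (fun j => BL n h q a j ^ 2)) :=
    fun j _ k _ _ => (BL_commute n h q a j k).pow_pow 2 2
  have hset : Finset.piAntidiag (Finset.univ : Finset (Fin n)) r
      = Finset.Nat.antidiagonalTuple n r := by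
    ext σ
    simp [Finset.mem_piAntidiag, Finset.Nat.mem_antidiagonalTuple]
  have happ : (Mh n h q a)^[2 * r] f m = ((ML n h q a ^ (2 * r)) f) m := by
    rw [Module.End.pow_apply]; rfl
  have hML2 : ML n h q a ^ (2 * r)
      = ((-1 : ℝ) ^ r) • ((∑ j, BL n h q a j ^ 2) ^ r) := by
    rw [pow_mul, sq, ML_sq, ← neg_one_smul ℝ (∑ j, BL n h q a j ^ 2), smul_pow]
  rw [happ, hML2, LinearMap.smul_apply, Pi.smul_apply,
    Finset.sum_pow_eq_sum_piAntidiag_of_commute _ _ hcomm, hset]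
  congr 1
  simp only [LinearMap.coe_sum, Finset.sum_apply]
  refine Finset.sum_congr rfl fun σ hσ => ?_
  have hs : ∑ j, σ j = r := (Finset.Nat.mem_antidiagonalTuple).mp hσ
  have hprodne : (∏ j, ((σ j).factorial : ℝ)) ≠ 0 := by positivity
  have hcast : ((Nat.multinomial Finset.univ σ : ℕ) : ℝ)
      = (r.factorial : ℝ) / ∏ j, ((σ j).factorial : ℝ) := by
    rw [eq_div_iff hprodne]
    have spec := Nat.multinomial_spec Finset.univ σ
    rw [hs] at spec
    push_cast [← spec]
    ring
  have hprod : Finset.univ.noncommProd (fun j => (BL n h q a j ^ 2) ^ σ j)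
        (hcomm.mono' fun _ _ hx => hx.pow_pow _ _)
      = (List.ofFn (fun j => BL n h q a j ^ (2 * σ j))).prod := by
    rw [noncommProd_univ]
    exact congrArg List.prod (congrArg List.ofFn (funext fun j => (pow_mul _ 2 (σ j)).symm))
  rw [Module.End.mul_apply, Module.End.natCast_apply, Pi.smul_apply,
    ← Nat.cast_smul_eq_nsmul ℝ, hcast, hprod, Bcomp_eq]
end main

/-- multinomial expansion of the even powers of `M_h`:
`((M_h)^{2r} f)(x) = (−1)^r·Σ_{|σ| = r} (r!/σ!)·((B_1^{2σ_1} ∘ ⋯ ∘ B_n^{2σ_n}) f)(x)`,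
the sum running over all multi-indices `σ ∈ ℕⁿ` with `σ_1 + ⋯ + σ_n = r`. -/
theorem stmt_15 (n : ℕ) (h q : ℝ) (hh : 0 < h) (hq : 0 < q)
    (a : ℝ → ℝ) (r : ℕ) (f : LF n) (m : Fin n → ℤ) :
    ((Mh n h q a)^[2 * r] f) m
      = ((-1 : ℝ) ^ r) •
          ∑ σ ∈ Finset.Nat.antidiagonalTuple n r,
            ((r.factorial : ℝ) / ∏ j, ((σ j).factorial : ℝ)) •
              (Bcomp n h q a σ f) m :=
  stmt_15' n h q a r f m
end
end
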